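/- Let x ∈ ∂Δ², (φ_g, π_g) the g-projection device with π̃_g(z₁,z₂) = z₁, and σ a x-curve written as σ(t) = π_g(σ(t)) + α(t), so α(t) = (0, α₂(t)) with α₂(t) → 0. Then σ is g-special (K_{Δ²}(σ(t), π_g(σ(t))) → 0) if and only if lim_{t→1⁻} |α₂(t)| / (1 − |g(σ₁(t))|) = 0. -/

import Mathlib

open Filter Topology
open scoped ENNReal

noncomputable section

/-- The open unit disc in `ℂ`. -/
def disc : Set ℂ := {z : ℂ | ‖z‖ < 1}

/-- The bidisc `Δ²`. -/
def bidisc : Set (ℂ × ℂ) := disc ×ˢ disc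

/-- The Poincaré distance on the unit disc (formula-wise on `ℂ`). -/
def pd (z w : ℂ) : ℝ :=
  (1/2) * Real.log ((1 + ‖(z - w) / (1 - (starRingEnd ℂ) z * w)‖) /
    (1 - ‖(z - w) / (1 - (starRingEnd ℂ) z * w)‖))

/-- The Kobayashi distance of the bidisc: max of Poincaré distances. -/
def kd (z w : ℂ × ℂ) : ℝ := max (pd z.1 w.1) (pd z.2 w.2)

/-- The Stolz region of vertex `τ` and amplitude `M`. -/
def stolz (τ : ℂ) (M : ℝ) : Set ℂ :=
  {z ∈ disc | ‖τ - z‖ < M * (1 - ‖z‖)}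

/-- `g` has non-tangential limit `L` at `τ ∈ ∂Δ`. -/
def NTlim (g : ℂ → ℂ) (τ L : ℂ) : Prop :=
  ∀ M > (1:ℝ), Tendsto g (nhdsWithin τ (stolz τ M)) (nhds L)

/-- The boundary dilation coefficient of `g` at `τ`, as an extended real. -/
def lamE (g : ℂ → ℂ) (τ : ℂ) : EReal :=
  Filter.liminf (fun z => (((1 - ‖g z‖) / (1 - ‖z‖) : ℝ) : EReal))
    (nhdsWithin τ disc)

/-- Open horocycle of center `τ ∈ ∂Δ` and radius `R`. -/
def horo (τ : ℂ) (R : ℝ) : Set ℂ :=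
  {z ∈ disc | ‖τ - z‖ ^ 2 / (1 - ‖z‖ ^ 2) < R}

/-- Closed horocycle of center `τ ∈ ∂Δ` and radius `R`. -/
def horoC (τ : ℂ) (R : ℝ) : Set ℂ :=
  {z ∈ disc | ‖τ - z‖ ^ 2 / (1 - ‖z‖ ^ 2) ≤ R}

/-- The Busemann sublevel set of radius `R` associated to the geodesic `φ`. -/
def busemannSub (φ : ℂ → ℂ × ℂ) (R : ℝ) : Set (ℂ × ℂ) :=
  {x ∈ bidisc | ∃ L : ℝ,
    Tendsto (fun r : ℝ => kd x (φ (r : ℂ)) - kd (φ 0) (φ (r : ℂ)))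
      (nhdsWithin 1 (Set.Iio 1)) (nhds L) ∧
    L ≤ (1/2) * Real.log R}

/-- Small horosphere of center `y ∈ ∂Δ²` and radius `R`. -/
def smallHoro (y : ℂ × ℂ) (R : ℝ) : Set (ℂ × ℂ) :=
  {z ∈ bidisc |
    Filter.limsup (fun w => ((kd z w - kd 0 w : ℝ) : EReal)) (nhdsWithin y bidisc) <
      (((1/2) * Real.log R : ℝ) : EReal)}

/-- Big horosphere of center `y ∈ ∂Δ²` and radius `R`. -/
def bigHoro (y : ℂ × ℂ) (R : ℝ) : Set (ℂ × ℂ) :=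
  {z ∈ bidisc |
    Filter.liminf (fun w => ((kd z w - kd 0 w : ℝ) : EReal)) (nhdsWithin y bidisc) <
      (((1/2) * Real.log R : ℝ) : EReal)}

/-- The g-Koranyi region of amplitude `M` associated to the geodesic `φ`. -/
def koranyi (φ : ℂ → ℂ × ℂ) (M : ℝ) : Set (ℂ × ℂ) :=
  {z ∈ bidisc | ∃ L : ℝ,
    Tendsto (fun r : ℝ => kd z (φ (r : ℂ)) - kd (φ 0) (φ (r : ℂ)))
      (nhdsWithin 1 (Set.Iio 1)) (nhds L) ∧
    L + kd (φ 0) z < Real.log M}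

/-- A continuous curve in `Δ²` converging to `x` as `t → 1⁻`. -/
def xcurve (σ : ℝ → ℂ × ℂ) (x : ℂ × ℂ) : Prop :=
  ContinuousOn σ (Set.Ico 0 1) ∧ (∀ t ∈ Set.Ico (0:ℝ) 1, σ t ∈ bidisc) ∧
    Tendsto σ (nhdsWithin 1 (Set.Iio 1)) (nhds x)

/-- A curve in `Δ` converging non-tangentially to `τ ∈ ∂Δ`. -/
def NTcurve (w : ℝ → ℂ) (τ : ℂ) : Prop :=
  Tendsto w (nhdsWithin 1 (Set.Iio 1)) (nhds τ) ∧
    ∃ M : ℝ, ∀ᶠ t in nhdsWithin (1:ℝ) (Set.Iio 1),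
      ‖τ - w t‖ ≤ M * (1 - ‖w t‖)

/-- Horocycle with possibly infinite coefficient / interior center:
`E_Δ(τ, lam·R)`, with the convention that it is all of `Δ` when `τ` is interior
or the coefficient is infinite. -/
def horoE (τ : ℂ) (lam : ℝ≥0∞) (R : ℝ) : Set ℂ :=
  if ‖τ‖ = 1 ∧ lam ≠ ⊤ then
    {z ∈ disc | ‖τ - z‖ ^ 2 / (1 - ‖z‖ ^ 2) < lam.toReal * R}
  else disc

/-- `(1/2) log` of the `φ_g`-boundary dilation coefficient of `f` at `x` (as an
extended real, via `limsup` along the radius). -/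
def lamPhi (f : ℂ × ℂ → ℂ) (g : ℂ → ℂ) (x1 : ℂ) : EReal :=
  Filter.limsup
    (fun t : ℝ =>
      ((kd 0 ((t : ℂ) * x1, g ((t : ℂ) * x1)) -
          pd 0 (f ((t : ℂ) * x1, g ((t : ℂ) * x1))) : ℝ) : EReal))
    (nhdsWithin 1 (Set.Iio 1))

/-- `(1/2) log` of Abate's boundary dilation coefficient of `f` at `x`. -/
def alphaF (f : ℂ × ℂ → ℂ) (x : ℂ × ℂ) : EReal :=
  Filter.liminf (fun w => ((kd 0 w - pd 0 (f w) : ℝ) : EReal)) (nhdsWithin x bidisc)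

/-- `τ ∈ ∂Δ²` is a generalized Wolff point of `f`: some complex geodesic through
`τ` has all its Busemann sublevel sets `f`-invariant. -/
def GenWolff (f : ℂ × ℂ → ℂ × ℂ) (τ : ℂ × ℂ) : Prop :=
  τ ∈ frontier bidisc ∧
  ∃ φ : ℂ → ℂ × ℂ, Set.MapsTo φ disc bidisc ∧
    (∀ z ∈ disc, ∀ w ∈ disc, kd (φ z) (φ w) = pd z w) ∧
    τ ∈ closure (φ '' disc) ∧
    ∀ R > (0:ℝ), Set.MapsTo f (busemannSub φ R) (busemannSub φ R)

end

/-!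
Both distances in `kd (σ t) (π_g (σ t))` are Poincaré distances, and the first one vanishes since
the two points share their first coordinate; so `σ` is `g`-special iff
`ω(σ₂(t), g(σ₁(t))) → 0`, i.e. iff the pseudo-hyperbolic distance `ρ` between these points tends
to `0`. With `a = |σ₂ - g(σ₁)|`, `b = 1 - |g(σ₁)|` and `d = |1 - σ̄₂ g(σ₁)|` one has `ρ = a / d` and
`b ≤ d ≤ 2b + a`, hence `ρ ≤ a / b ≤ 2ρ / (1 - ρ)`.
-/

namespace Real

theorem continuousAt_artanh {x : ℝ} (hx : x ∈ Set.Ioo (-1) 1) : ContinuousAt artanh x := by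
  have hpos : 0 < (1 + x) / (1 - x) := div_pos (by linarith [hx.1]) (by linarith [hx.2])
  unfold artanh
  refine ContinuousAt.log (ContinuousAt.sqrt ?_) (sqrt_pos.2 hpos).ne'
  exact (continuousAt_const.add continuousAt_id).div (continuousAt_const.sub continuousAt_id)
    (by linarith [hx.2])

theorem continuous_tanh : Continuous tanh := by
  simp only [funext tanh_eq_sinh_div_cosh]
  exact continuous_sinh.div continuous_cosh fun x => (cosh_pos x).ne'

theorem tendsto_artanh_comp_zero_iff {α : Type*} {l : Filter α} {ρ : α → ℝ}
    (hρ : ∀ᶠ a in l, ρ a ∈ Set.Ioo (-1) 1) :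
    Tendsto (fun a => artanh (ρ a)) l (𝓝 0) ↔ Tendsto ρ l (𝓝 0) := by
  constructor
  · intro h
    have hcomp := (continuous_tanh.tendsto 0).comp h
    rw [Function.comp_def, tanh_zero] at hcomp
    exact hcomp.congr' (hρ.mono fun a ha => tanh_artanh ha)
  · intro h
    have hcomp := (continuousAt_artanh (by norm_num : (0 : ℝ) ∈ Set.Ioo (-1) 1)).tendsto.comp h
    rwa [Function.comp_def, artanh_zero] at hcomp

end Real

theorem mem_disc {z : ℂ} : z ∈ disc ↔ ‖z‖ < 1 := Iff.rfl

noncomputable def pseudoDist (z w : ℂ) : ℝ := ‖(z - w) / (1 - (starRingEnd ℂ) z * w)‖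

theorem pseudoDist_eq (z w : ℂ) :
    pseudoDist z w = ‖z - w‖ / ‖1 - (starRingEnd ℂ) z * w‖ := norm_div _ _

theorem norm_sub_lt_norm_one_sub_conj_mul {z w : ℂ} (hz : z ∈ disc) (hw : w ∈ disc) :
    ‖z - w‖ < ‖1 - (starRingEnd ℂ) z * w‖ := by
  rw [mem_disc, ← sq_lt_one_iff₀ (norm_nonneg _), Complex.sq_norm] at hz hw
  have key : Complex.normSq (1 - (starRingEnd ℂ) z * w) - Complex.normSq (z - w)
      = (1 - Complex.normSq z) * (1 - Complex.normSq w) := by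
    simp only [Complex.normSq_apply, Complex.sub_re, Complex.sub_im, Complex.mul_re,
      Complex.mul_im, Complex.conj_re, Complex.conj_im, Complex.one_re, Complex.one_im]
    ring
  refine lt_of_pow_lt_pow_left₀ 2 (norm_nonneg _) ?_
  rw [Complex.sq_norm, Complex.sq_norm]
  nlinarith

theorem one_sub_norm_le_norm_one_sub_conj_mul {z : ℂ} (hz : ‖z‖ ≤ 1) (w : ℂ) :
    1 - ‖w‖ ≤ ‖1 - (starRingEnd ℂ) z * w‖ := by
  have hzw : ‖(starRingEnd ℂ) z * w‖ ≤ ‖w‖ := by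
    rw [norm_mul, Complex.norm_conj]
    exact mul_le_of_le_one_left (norm_nonneg w) hz
  have := norm_sub_norm_le (1 : ℂ) ((starRingEnd ℂ) z * w)
  rw [norm_one] at this
  linarith

theorem norm_one_sub_conj_mul_le (z : ℂ) {w : ℂ} (hw : ‖w‖ ≤ 1) :
    ‖1 - (starRingEnd ℂ) z * w‖ ≤ 2 * (1 - ‖w‖) + ‖z - w‖ := by
  have hsplit : (1 : ℂ) - (starRingEnd ℂ) z * w
      = ((1 - ‖w‖ ^ 2 : ℝ) : ℂ) + (starRingEnd ℂ) (w - z) * w := by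
    rw [map_sub, Complex.ofReal_sub, Complex.ofReal_one, Complex.ofReal_pow, ← Complex.mul_conj',
      mul_comm w]
    ring
  have hw2 : 0 ≤ 1 - ‖w‖ ^ 2 := by nlinarith [norm_nonneg w]
  calc ‖1 - (starRingEnd ℂ) z * w‖
      ≤ ‖((1 - ‖w‖ ^ 2 : ℝ) : ℂ)‖ + ‖(starRingEnd ℂ) (w - z) * w‖ := by
        rw [hsplit]
        exact norm_add_le _ _
    _ = (1 - ‖w‖ ^ 2) + ‖z - w‖ * ‖w‖ := by
        rw [Complex.norm_real, Real.norm_of_nonneg hw2, norm_mul, Complex.norm_conj,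
          norm_sub_rev]
    _ ≤ 2 * (1 - ‖w‖) + ‖z - w‖ := by nlinarith [norm_nonneg w, norm_nonneg (z - w)]

theorem pseudoDist_nonneg (z w : ℂ) : 0 ≤ pseudoDist z w := norm_nonneg _

theorem pseudoDist_lt_one {z w : ℂ} (hz : z ∈ disc) (hw : w ∈ disc) : pseudoDist z w < 1 := by
  have hlt := norm_sub_lt_norm_one_sub_conj_mul hz hw
  rw [pseudoDist_eq, div_lt_one ((norm_nonneg _).trans_lt hlt)]
  exact hlt

theorem pd_eq_artanh_pseudoDist {z w : ℂ} (hz : z ∈ disc) (hw : w ∈ disc) :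
    pd z w = Real.artanh (pseudoDist z w) := by
  rw [Real.artanh_eq_half_log ⟨by linarith [pseudoDist_nonneg z w], (pseudoDist_lt_one hz hw).le⟩]
  rfl

theorem kd_mk_fst_eq_pd (z₁ : ℂ) {z₂ w : ℂ} (hz₂ : z₂ ∈ disc) (hw : w ∈ disc) :
    kd (z₁, z₂) (z₁, w) = pd z₂ w := by
  have hself : pd z₁ z₁ = 0 := by simp [pd]
  have hnonneg : 0 ≤ pd z₂ w := by
    rw [pd_eq_artanh_pseudoDist hz₂ hw]
    exact Real.artanh_nonneg (pseudoDist_nonneg z₂ w)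
  simp only [kd, hself, max_eq_right hnonneg]

theorem pseudoDist_le_div {z w : ℂ} (hz : ‖z‖ ≤ 1) (hw : w ∈ disc) :
    pseudoDist z w ≤ ‖z - w‖ / (1 - ‖w‖) := by
  rw [pseudoDist_eq]
  exact div_le_div_of_nonneg_left (norm_nonneg _) (sub_pos.2 hw)
    (one_sub_norm_le_norm_one_sub_conj_mul hz w)

theorem div_le_two_mul_pseudoDist_div {z w : ℂ} (hz : z ∈ disc) (hw : w ∈ disc) :
    ‖z - w‖ / (1 - ‖w‖) ≤ 2 * pseudoDist z w / (1 - pseudoDist z w) := by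
  have hlt := norm_sub_lt_norm_one_sub_conj_mul hz hw
  have hD := norm_one_sub_conj_mul_le z (mem_disc.1 hw).le
  rw [pseudoDist_eq]
  set D := ‖1 - (starRingEnd ℂ) z * w‖
  have hDpos : 0 < D := (norm_nonneg _).trans_lt hlt
  have hrw : 2 * (‖z - w‖ / D) / (1 - ‖z - w‖ / D) = ‖z - w‖ / ((D - ‖z - w‖) / 2) := by
    field_simp
  rw [hrw]
  exact div_le_div_of_nonneg_left (norm_nonneg _) (by linarith) (by linarith)

theorem tendsto_pseudoDist_zero_iff {α : Type*} {l : Filter α} {z w : α → ℂ}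
    (h : ∀ᶠ a in l, z a ∈ disc ∧ w a ∈ disc) :
    Tendsto (fun a => pseudoDist (z a) (w a)) l (𝓝 0) ↔
      Tendsto (fun a => ‖z a - w a‖ / (1 - ‖w a‖)) l (𝓝 0) := by
  constructor
  · intro hρ
    have hbound : Tendsto (fun a => 2 * pseudoDist (z a) (w a) / (1 - pseudoDist (z a) (w a)))
        l (𝓝 0) := by
      simpa only [Pi.div_def, mul_zero, sub_zero, zero_div] using
        (hρ.const_mul 2).div (tendsto_const_nhds.sub hρ) (by norm_num)
    refine tendsto_of_tendsto_of_tendsto_of_le_of_le' tendsto_const_nhds hbound ?_ ?_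
    · filter_upwards [h] with a ha
      exact div_nonneg (norm_nonneg _) (sub_pos.2 ha.2).le
    · filter_upwards [h] with a ha
      exact div_le_two_mul_pseudoDist_div ha.1 ha.2
  · intro hq
    refine tendsto_of_tendsto_of_tendsto_of_le_of_le' tendsto_const_nhds hq
      (Eventually.of_forall fun a => pseudoDist_nonneg _ _) ?_
    filter_upwards [h] with a ha
    exact pseudoDist_le_div (mem_disc.1 ha.1).le ha.2

theorem tendsto_pd_zero_iff {α : Type*} {l : Filter α} {z w : α → ℂ}
    (h : ∀ᶠ a in l, z a ∈ disc ∧ w a ∈ disc) :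
    Tendsto (fun a => pd (z a) (w a)) l (𝓝 0) ↔
      Tendsto (fun a => ‖z a - w a‖ / (1 - ‖w a‖)) l (𝓝 0) := by
  rw [← tendsto_pseudoDist_zero_iff h,
    tendsto_congr' (h.mono fun a ha => pd_eq_artanh_pseudoDist ha.1 ha.2)]
  refine Real.tendsto_artanh_comp_zero_iff (h.mono fun a ha => ⟨?_, pseudoDist_lt_one ha.1 ha.2⟩)
  linarith [pseudoDist_nonneg (z a) (w a)]

theorem special_iff_alpha_quotient_general
    (x : ℂ × ℂ)
    (g : ℂ → ℂ) (hgm : Set.MapsTo g disc disc)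
    (σ : ℝ → ℂ × ℂ) (hσ : xcurve σ x) :
    Tendsto (fun t => kd (σ t) ((σ t).1, g ((σ t).1)))
        (nhdsWithin 1 (Set.Iio 1)) (nhds 0) ↔
      Tendsto (fun t => ‖(σ t).2 - g ((σ t).1)‖ / (1 - ‖g ((σ t).1)‖))
        (nhdsWithin 1 (Set.Iio 1)) (nhds 0) := by
  have hmem : ∀ᶠ t in 𝓝[<] (1 : ℝ), (σ t).2 ∈ disc ∧ g (σ t).1 ∈ disc := by
    filter_upwards [Ioo_mem_nhdsLT (zero_lt_one' ℝ)] with t ht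
    have hσt : σ t ∈ bidisc := hσ.2.1 t ⟨ht.1.le, ht.2⟩
    exact ⟨hσt.2, hgm hσt.1⟩
  rw [← tendsto_pd_zero_iff hmem]
  exact tendsto_congr' (hmem.mono fun t ht => kd_mk_fst_eq_pd _ ht.1 ht.2)

/-- with `π̃_g(z₁,z₂) = z₁` and `α₂(t) = σ₂(t) - g(σ₁(t))`, the
curve `σ` is `g`-special iff `|α₂(t)|/(1 - |g(σ₁(t))|) → 0`. -/
theorem special_iff_alpha_quotient
    (x : ℂ × ℂ) (hx : x ∈ frontier bidisc)
    (g : ℂ → ℂ) (hg : DifferentiableOn ℂ g disc) (hgm : Set.MapsTo g disc disc)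
    (hiso : ∀ z ∈ disc, ∀ w ∈ disc, kd (z, g z) (w, g w) = pd z w)
    (hpass : x ∈ closure ((fun z => (z, g z)) '' disc))
    (σ : ℝ → ℂ × ℂ) (hσ : xcurve σ x)
    (hα : Tendsto (fun t => (σ t).2 - g ((σ t).1)) (nhdsWithin 1 (Set.Iio 1)) (nhds 0)) :
    Tendsto (fun t => kd (σ t) ((σ t).1, g ((σ t).1)))
        (nhdsWithin 1 (Set.Iio 1)) (nhds 0) ↔
      Tendsto (fun t => ‖(σ t).2 - g ((σ t).1)‖ / (1 - ‖g ((σ t).1)‖))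
        (nhdsWithin 1 (Set.Iio 1)) (nhds 0) :=
  special_iff_alpha_quotient_general x g hgm σ hσ
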